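/- Kernel representation for the odd solution of the boundary value problem G'' + 4G = g on [−π/4, π/4]: Let g : [−π/4,π/4] → ℝ be continuous and odd. Define G on [0,π/4] by G(θ) := (1/4) ∫₀^{π/4} ( |sin(2θ − 2θ')| − |sin(2θ + 2θ')| ) g(θ') dθ', and extend G to [−π/4,π/4] as an odd function. Then G is twice continuously differentiable on [−π/4,π/4], satisfies G''(θ) + 4G(θ) = g(θ) for all θ ∈ [−π/4,π/4] and G(±π/4) = 0; moreover G is the unique odd C² function with these properties. -/

import Mathlib

open Set Real intervalIntegral
open scoped Real

noncomputable section

/-- The interval `[-π/4, π/4]`. -/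
def I14 : Set ℝ := Icc (-(π/4)) (π/4)

/-- The kernel formula for the odd solution of `G'' + 4G = g` on `[0,π/4]`, extended to
`[-π/4,π/4]` as an odd function. -/
def Gformula (g : ℝ → ℝ) (θ : ℝ) : ℝ :=
  if 0 ≤ θ then
    (1/4) * ∫ θ' in (0:ℝ)..(π/4),
      (|Real.sin (2*θ - 2*θ')| - |Real.sin (2*θ + 2*θ')|) * g θ'
  else
    -((1/4) * ∫ θ' in (0:ℝ)..(π/4),
      (|Real.sin (2*(-θ) - 2*θ')| - |Real.sin (2*(-θ) + 2*θ')|) * g θ')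

/-!
On `[0, π/4]` the kernel equals `-2 cos 2θ sin 2θ'` for `θ' ≤ θ` and `-2 sin 2θ cos 2θ'` for
`θ' ≥ θ`, so `Gformula g` is the variation-of-constants solution
`½ (sin 2θ (P θ - P (π/4)) - cos 2θ Q θ)` with `P θ = ∫₀^θ cos 2t g t`, `Q θ = ∫₀^θ sin 2t g t`.
After replacing `g` by a continuous odd extension to `ℝ`, this solves `G'' + 4G = g` everywhere,
is odd because `P` is even and `Q` is odd, and vanishes at `π/4` by the choice of constant.
For uniqueness, `u' sin kx - k u cos kx` and `u' cos kx + k u sin kx` are constant along a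
solution of `u'' + k²u = 0`, which pins `u` down by `u(0)` and `u'(0)`; oddness gives `u(0) = 0`,
and then `u(π/4) = 0` forces `u'(0) = 0`.
-/

theorem exists_continuous_odd_extension {g : ℝ → ℝ} {a : ℝ} (ha : 0 ≤ a)
    (hg : ContinuousOn g (Icc (-a) a)) (hodd : ∀ x ∈ Icc (-a) a, g (-x) = -g x) :
    ∃ f : ℝ → ℝ, Continuous f ∧ f.Odd ∧ EqOn f g (Icc (-a) a) := by
  set f₀ := IccExtend (neg_le_self ha) ((Icc (-a) a).domRestrict g)
  have hf₀ : Continuous f₀ := hg.domRestrict.Icc_extend'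
  have hf₀g : EqOn f₀ g (Icc (-a) a) := fun x hx => IccExtend_of_mem _ _ hx
  refine ⟨fun x => (f₀ x - f₀ (-x)) / 2, by fun_prop, fun x => by simp only [neg_neg]; ring,
    fun x hx => ?_⟩
  have hnx : -x ∈ Icc (-a) a := ⟨neg_le_neg hx.2, by linarith [hx.1]⟩
  simp only [hf₀g hx, hf₀g hnx, hodd x hx]
  ring

theorem Function.Odd.intervalIntegral_zero_neg {h : ℝ → ℝ} (hh : h.Odd) (x : ℝ) :
    ∫ t in (0:ℝ)..-x, h t = ∫ t in (0:ℝ)..x, h t := by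
  have := integral_comp_neg (a := 0) (b := x) h
  simp only [hh.eq, integral_neg, neg_zero] at this
  rw [integral_symm 0 (-x)] at this
  linarith

theorem Function.Even.intervalIntegral_zero_neg {h : ℝ → ℝ} (hh : h.Even) (x : ℝ) :
    ∫ t in (0:ℝ)..-x, h t = -∫ t in (0:ℝ)..x, h t := by
  have := integral_comp_neg (a := 0) (b := x) h
  simp only [hh.eq, neg_zero] at this
  rw [integral_symm 0 (-x)] at this
  linarith

theorem iteratedDerivWithin_two {f : ℝ → ℝ} {s : Set ℝ} :
    iteratedDerivWithin 2 f s = derivWithin (derivWithin f s) s := by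
  rw [iteratedDerivWithin_succ', iteratedDerivWithin_one]

section SecondDerivative

variable {u u' u'' : ℝ → ℝ}

theorem contDiff_two_of_hasDerivAt (hu : ∀ x, HasDerivAt u (u' x) x)
    (hu' : ∀ x, HasDerivAt u' (u'' x) x) (hu'' : Continuous u'') : ContDiff ℝ 2 u := by
  have hderiv : deriv u = u' := funext fun x => (hu x).deriv
  have hu'C1 : ContDiff ℝ 1 u' := contDiff_one_iff_deriv.mpr
    ⟨fun x => (hu' x).differentiableAt, (funext fun x => (hu' x).deriv) ▸ hu''⟩
  exact contDiff_succ_iff_deriv.mpr ⟨fun x => (hu x).differentiableAt, by simp, hderiv ▸ hu'C1⟩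

theorem iteratedDerivWithin_two_eq_of_hasDerivAt (hu : ∀ x, HasDerivAt u (u' x) x)
    (hu' : ∀ x, HasDerivAt u' (u'' x) x) {s : Set ℝ} (hs : UniqueDiffOn ℝ s) {x : ℝ}
    (hx : x ∈ s) : iteratedDerivWithin 2 u s x = u'' x := by
  have hderiv : EqOn (derivWithin u s) u' s := fun y hy =>
    (hu y).hasDerivWithinAt.derivWithin (hs y hy)
  rw [iteratedDerivWithin_two, derivWithin_congr hderiv (hderiv hx)]
  exact (hu' x).hasDerivWithinAt.derivWithin (hs x hx)

end SecondDerivative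

theorem hasDerivAt_sin_const_mul (k x : ℝ) :
    HasDerivAt (fun y => sin (k * y)) (k * cos (k * x)) x := by
  simpa [mul_comm] using ((hasDerivAt_id x).const_mul k).sin

theorem hasDerivAt_cos_const_mul (k x : ℝ) :
    HasDerivAt (fun y => cos (k * y)) (-(k * sin (k * x))) x := by
  simpa [mul_comm] using ((hasDerivAt_id x).const_mul k).cos

theorem Convex.is_const_of_hasDerivWithinAt_zero {s : Set ℝ} (hs : Convex ℝ s) {W : ℝ → ℝ}
    (hW : ∀ x ∈ s, HasDerivWithinAt W 0 s x) {x y : ℝ} (hx : x ∈ s) (hy : y ∈ s) :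
    W x = W y := by
  have := hs.norm_image_sub_le_of_norm_hasDerivWithin_le hW (fun _ _ => norm_zero.le) hy hx
  rwa [zero_mul, norm_le_zero_iff, sub_eq_zero] at this

theorem eq_cos_sin_of_iteratedDerivWithin_two_add {u : ℝ → ℝ} {s : Set ℝ} {k : ℝ} (hk : k ≠ 0)
    (hs : Convex ℝ s) (hs' : UniqueDiffOn ℝ s) (hu : ContDiffOn ℝ 2 u s)
    (hode : ∀ x ∈ s, iteratedDerivWithin 2 u s x + k ^ 2 * u x = 0) {x₀ x : ℝ} (hx₀ : x₀ ∈ s)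
    (hx : x ∈ s) :
    u x = u x₀ * cos (k * (x - x₀)) + derivWithin u s x₀ / k * sin (k * (x - x₀)) := by
  set u' := derivWithin u s
  have hu1 : ∀ y ∈ s, HasDerivWithinAt u (u' y) s y := fun y hy =>
    ((hu.differentiableOn (by norm_num)) y hy).hasDerivWithinAt
  have hu2 : ∀ y ∈ s, HasDerivWithinAt u' (-(k ^ 2 * u y)) s y := by
    intro y hy
    have h := (((hu.derivWithin hs' (m := 1) (by norm_num)).differentiableOn one_ne_zero) y
      hy).hasDerivWithinAt
    rwa [← iteratedDerivWithin_two, eq_neg_of_add_eq_zero_left (hode y hy)] at h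
  have hsin := hasDerivAt_sin_const_mul k
  have hcos := hasDerivAt_cos_const_mul k
  have hW₁ : u' x * sin (k * x) - k * u x * cos (k * x) =
      u' x₀ * sin (k * x₀) - k * u x₀ * cos (k * x₀) := by
    refine hs.is_const_of_hasDerivWithinAt_zero
      (W := fun y => u' y * sin (k * y) - k * u y * cos (k * y)) (fun y hy => ?_) hx hx₀
    exact (((hu2 y hy).mul (hsin y).hasDerivWithinAt).sub
      (((hu1 y hy).const_mul k).mul (hcos y).hasDerivWithinAt)).congr_deriv (by ring)
  have hW₂ : u' x * cos (k * x) + k * u x * sin (k * x) =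
      u' x₀ * cos (k * x₀) + k * u x₀ * sin (k * x₀) := by
    refine hs.is_const_of_hasDerivWithinAt_zero
      (W := fun y => u' y * cos (k * y) + k * u y * sin (k * y)) (fun y hy => ?_) hx hx₀
    exact (((hu2 y hy).mul (hcos y).hasDerivWithinAt).add
      (((hu1 y hy).const_mul k).mul (hsin y).hasDerivWithinAt)).congr_deriv (by ring)
  have hku : k * u x = k * u x₀ * cos (k * (x - x₀)) + u' x₀ * sin (k * (x - x₀)) := by
    rw [mul_sub, cos_sub, sin_sub]
    linear_combination sin (k * x) * hW₂ - cos (k * x) * hW₁ - k * u x * sin_sq_add_cos_sq (k * x)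
  field_simp
  linear_combination hku

def cosMoment (k : ℝ) (f : ℝ → ℝ) (θ : ℝ) : ℝ := ∫ t in (0:ℝ)..θ, cos (k * t) * f t

def sinMoment (k : ℝ) (f : ℝ → ℝ) (θ : ℝ) : ℝ := ∫ t in (0:ℝ)..θ, sin (k * t) * f t

/-- Duhamel's solution `(1/k) ∫₀^θ sin (k (θ - t)) f t dt` of `u'' + k²u = f`, minus
`(c/k) sin (kθ)`. -/
def variationOfConstants (k c : ℝ) (f : ℝ → ℝ) (θ : ℝ) : ℝ :=
  (sin (k * θ) * (cosMoment k f θ - c) - cos (k * θ) * sinMoment k f θ) / k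

def variationOfConstantsDeriv (k c : ℝ) (f : ℝ → ℝ) (θ : ℝ) : ℝ :=
  cos (k * θ) * (cosMoment k f θ - c) + sin (k * θ) * sinMoment k f θ

section VariationOfConstants

variable {f : ℝ → ℝ} {k : ℝ}

theorem hasDerivAt_cosMoment (hf : Continuous f) (k θ : ℝ) :
    HasDerivAt (cosMoment k f) (cos (k * θ) * f θ) θ :=
  ((by fun_prop : Continuous fun t => cos (k * t) * f t).integral_hasStrictDerivAt 0 θ).hasDerivAt

theorem hasDerivAt_sinMoment (hf : Continuous f) (k θ : ℝ) :
    HasDerivAt (sinMoment k f) (sin (k * θ) * f θ) θ :=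
  ((by fun_prop : Continuous fun t => sin (k * t) * f t).integral_hasStrictDerivAt 0 θ).hasDerivAt

theorem hasDerivAt_variationOfConstants (hf : Continuous f) (hk : k ≠ 0) (c θ : ℝ) :
    HasDerivAt (variationOfConstants k c f) (variationOfConstantsDeriv k c f θ) θ := by
  refine ((((hasDerivAt_sin_const_mul k θ).mul ((hasDerivAt_cosMoment hf k θ).sub_const c)).sub
    ((hasDerivAt_cos_const_mul k θ).mul (hasDerivAt_sinMoment hf k θ))).div_const k).congr_deriv ?_
  rw [variationOfConstantsDeriv]
  field_simp
  ring

theorem hasDerivAt_variationOfConstantsDeriv (hf : Continuous f) (c θ : ℝ) :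
    HasDerivAt (variationOfConstantsDeriv k c f) (f θ - k ^ 2 * variationOfConstants k c f θ)
      θ := by
  refine (((hasDerivAt_cos_const_mul k θ).mul ((hasDerivAt_cosMoment hf k θ).sub_const c)).add
    ((hasDerivAt_sin_const_mul k θ).mul (hasDerivAt_sinMoment hf k θ))).congr_deriv ?_
  rw [variationOfConstants]
  field_simp
  linear_combination f θ * sin_sq_add_cos_sq (k * θ)

theorem contDiff_two_variationOfConstants (hf : Continuous f) (hk : k ≠ 0) (c : ℝ) :
    ContDiff ℝ 2 (variationOfConstants k c f) := by
  have hcont : Continuous (variationOfConstants k c f) := continuous_iff_continuousAt.2 fun θ =>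
    (hasDerivAt_variationOfConstants hf hk c θ).continuousAt
  exact contDiff_two_of_hasDerivAt (hasDerivAt_variationOfConstants hf hk c)
    (hasDerivAt_variationOfConstantsDeriv hf c) (hf.sub (continuous_const.mul hcont))

theorem iteratedDerivWithin_two_variationOfConstants_add (hf : Continuous f) (hk : k ≠ 0)
    (c : ℝ) {s : Set ℝ} (hs : UniqueDiffOn ℝ s) {θ : ℝ} (hθ : θ ∈ s) :
    iteratedDerivWithin 2 (variationOfConstants k c f) s θ +
      k ^ 2 * variationOfConstants k c f θ = f θ := by
  rw [iteratedDerivWithin_two_eq_of_hasDerivAt (hasDerivAt_variationOfConstants hf hk c)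
    (hasDerivAt_variationOfConstantsDeriv hf c) hs hθ]
  ring

theorem odd_variationOfConstants (hf : f.Odd) (k c : ℝ) : (variationOfConstants k c f).Odd := by
  intro θ
  have hcos : cosMoment k f (-θ) = cosMoment k f θ :=
    Function.Odd.intervalIntegral_zero_neg (fun t => by simp only [mul_neg, cos_neg, hf.eq]) θ
  have hsin : sinMoment k f (-θ) = -sinMoment k f θ :=
    Function.Even.intervalIntegral_zero_neg
      (fun t => by simp only [mul_neg, sin_neg, hf.eq]; ring) θ
  simp only [variationOfConstants, hcos, hsin, mul_neg, sin_neg, cos_neg]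
  ring

end VariationOfConstants

theorem abs_sin_sub_sub_abs_sin_add_of_le {x y : ℝ} (hy : 0 ≤ y) (hyx : y ≤ x) (hxy : x + y ≤ π) :
    |sin (x - y)| - |sin (x + y)| = -2 * cos x * sin y := by
  rw [abs_of_nonneg (sin_nonneg_of_nonneg_of_le_pi (by linarith) (by linarith)),
    abs_of_nonneg (sin_nonneg_of_nonneg_of_le_pi (by linarith) hxy), sin_sub, sin_add]
  ring

theorem abs_sin_sub_sub_abs_sin_add_of_ge {x y : ℝ} (hx : 0 ≤ x) (hxy : x ≤ y)
    (hxy' : x + y ≤ π) :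
    |sin (x - y)| - |sin (x + y)| = -2 * sin x * cos y := by
  rw [abs_of_nonpos (sin_nonpos_of_nonpos_of_neg_pi_le (by linarith) (by linarith)),
    abs_of_nonneg (sin_nonneg_of_nonneg_of_le_pi (by linarith) hxy'), sin_sub, sin_add]
  ring

theorem kernel_integral_eq_variationOfConstants {f : ℝ → ℝ} (hf : Continuous f) {θ : ℝ}
    (h0 : 0 ≤ θ) (hθ : θ ≤ π/4) :
    (1/4) * ∫ t in (0:ℝ)..(π/4), (|sin (2*θ - 2*t)| - |sin (2*θ + 2*t)|) * f t =
      variationOfConstants 2 (cosMoment 2 f (π/4)) f θ := by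
  set K := fun t => (|sin (2*θ - 2*t)| - |sin (2*θ + 2*t)|) * f t
  have hK : Continuous K := by fun_prop
  have hcos : Continuous fun t => cos (2 * t) * f t := by fun_prop
  have below : ∫ t in (0:ℝ)..θ, K t = -2 * cos (2*θ) * sinMoment 2 f θ := by
    rw [sinMoment, ← integral_const_mul]
    refine integral_congr fun t ht => ?_
    rw [uIcc_of_le h0] at ht
    simp only [K, abs_sin_sub_sub_abs_sin_add_of_le (by linarith [ht.1]) (by linarith [ht.2])
      (by linarith [ht.2] : 2*θ + 2*t ≤ π)]
    ring
  have above : ∫ t in θ..(π/4), K t =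
      -2 * sin (2*θ) * (cosMoment 2 f (π/4) - cosMoment 2 f θ) := by
    rw [cosMoment, cosMoment, integral_interval_sub_left (hcos.intervalIntegrable _ _)
      (hcos.intervalIntegrable _ _), ← integral_const_mul]
    refine integral_congr fun t ht => ?_
    rw [uIcc_of_le hθ] at ht
    simp only [K, abs_sin_sub_sub_abs_sin_add_of_ge (by linarith) (by linarith [ht.1])
      (by linarith [ht.2] : 2*θ + 2*t ≤ π)]
    ring
  rw [← integral_add_adjacent_intervals (hK.intervalIntegrable 0 θ)
    (hK.intervalIntegrable θ (π/4)), below, above, variationOfConstants]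
  ring

theorem Gformula_congr {f g : ℝ → ℝ} (h : EqOn f g (Icc 0 (π/4))) : Gformula f = Gformula g := by
  have hint : ∀ φ : ℝ → ℝ, ∫ t in (0:ℝ)..(π/4), φ t * f t = ∫ t in (0:ℝ)..(π/4), φ t * g t :=
    fun φ => integral_congr fun t ht => by
      rw [h (uIcc_of_le (by positivity : (0:ℝ) ≤ π/4) ▸ ht)]
  ext θ
  simp only [Gformula, hint]

theorem Gformula_eqOn_variationOfConstants {f : ℝ → ℝ} (hf : Continuous f) (hodd : f.Odd) :
    EqOn (Gformula f) (variationOfConstants 2 (cosMoment 2 f (π/4)) f) I14 := by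
  intro θ hθ
  rcases le_or_gt 0 θ with h | h
  · rw [Gformula, if_pos h]
    exact kernel_integral_eq_variationOfConstants hf h hθ.2
  · rw [Gformula, if_neg h.not_ge, kernel_integral_eq_variationOfConstants hf (by linarith)
      (by linarith [hθ.1]), odd_variationOfConstants hodd, neg_neg]

theorem variationOfConstants_pi_div_four (f : ℝ → ℝ) :
    variationOfConstants 2 (cosMoment 2 f (π/4)) f (π/4) = 0 := by
  rw [variationOfConstants, show (2:ℝ) * (π/4) = π/2 by ring, sin_pi_div_two, cos_pi_div_two]
  ring

theorem eqOn_I14_of_iteratedDerivWithin_two_add {u v f : ℝ → ℝ} (hu : ContDiffOn ℝ 2 u I14)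
    (hv : ContDiffOn ℝ 2 v I14) (hu' : ∀ θ ∈ I14, iteratedDerivWithin 2 u I14 θ + 4 * u θ = f θ)
    (hv' : ∀ θ ∈ I14, iteratedDerivWithin 2 v I14 θ + 4 * v θ = f θ) (hu0 : u 0 = 0)
    (hv0 : v 0 = 0) (huπ : u (π/4) = 0) (hvπ : v (π/4) = 0) : EqOn u v I14 := by
  have hπ4 : 0 < π/4 := by positivity
  have hs : UniqueDiffOn ℝ I14 := uniqueDiffOn_Icc (by linarith)
  have h0 : (0:ℝ) ∈ I14 := ⟨by linarith, hπ4.le⟩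
  have hπ : π/4 ∈ I14 := ⟨by linarith, le_rfl⟩
  have hode : ∀ θ ∈ I14, iteratedDerivWithin 2 (u - v) I14 θ + 2 ^ 2 * (u - v) θ = 0 := by
    intro θ hθ
    rw [iteratedDerivWithin_sub hθ hs (hu.contDiffWithinAt hθ) (hv.contDiffWithinAt hθ),
      Pi.sub_apply]
    linear_combination hu' θ hθ - hv' θ hθ
  have hsol := fun θ (hθ : θ ∈ I14) => eq_cos_sin_of_iteratedDerivWithin_two_add (s := I14)
    two_ne_zero (convex_Icc _ _) hs (hu.sub hv) hode h0 hθ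
  have hslope : derivWithin (fun x => u x - v x) I14 0 = 0 := by
    simpa [hu0, hv0, huπ, hvπ, show (2:ℝ) * (π/4) = π/2 by ring] using (hsol _ hπ).symm
  intro θ hθ
  simpa [hu0, hv0, hslope, sub_eq_zero] using hsol θ hθ

/-- **Kernel representation for the odd solution of `G'' + 4G = g` on `[-π/4,π/4]`
(formula (4.8)).** For continuous odd `g`, the function `Gformula g` is `C²`, solves
`G'' + 4G = g` with `G(±π/4) = 0`, is odd, and is the unique odd `C²` function with these
properties. -/
theorem kernel_representation_G
    (g : ℝ → ℝ) (hg : ContinuousOn g I14)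
    (hodd : ∀ θ ∈ I14, g (-θ) = - g θ) :
    ContDiffOn ℝ 2 (Gformula g) I14 ∧
    (∀ θ ∈ I14, iteratedDerivWithin 2 (Gformula g) I14 θ + 4 * Gformula g θ = g θ) ∧
    Gformula g (π/4) = 0 ∧ Gformula g (-(π/4)) = 0 ∧
    (∀ θ ∈ I14, Gformula g (-θ) = - Gformula g θ) ∧
    (∀ G₂ : ℝ → ℝ,
      (∀ θ ∈ I14, G₂ (-θ) = - G₂ θ) →
      ContDiffOn ℝ 2 G₂ I14 →
      (∀ θ ∈ I14, iteratedDerivWithin 2 G₂ I14 θ + 4 * G₂ θ = g θ) →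
      G₂ (π/4) = 0 → G₂ (-(π/4)) = 0 →
      ∀ θ ∈ I14, G₂ θ = Gformula g θ) := by
  have hπ : 0 < π/4 := by positivity
  have h0 : (0:ℝ) ∈ I14 := ⟨by linarith, hπ.le⟩
  have hπ4 : π/4 ∈ I14 := ⟨by linarith, le_rfl⟩
  obtain ⟨f, hfc, hfodd, hfg⟩ := exists_continuous_odd_extension hπ.le hg hodd
  set F := variationOfConstants 2 (cosMoment 2 f (π/4)) f
  have hGF : EqOn (Gformula g) F I14 := by
    rw [← Gformula_congr (hfg.mono (Icc_subset_Icc (by linarith) le_rfl))]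
    exact Gformula_eqOn_variationOfConstants hfc hfodd
  have hC2 : ContDiffOn ℝ 2 (Gformula g) I14 :=
    (contDiff_two_variationOfConstants hfc two_ne_zero _).contDiffOn.congr hGF
  have hode : ∀ θ ∈ I14, iteratedDerivWithin 2 (Gformula g) I14 θ + 4 * Gformula g θ = g θ := by
    intro θ hθ
    rw [iteratedDerivWithin_congr hGF hθ, hGF hθ, ← hfg hθ, show (4:ℝ) = 2 ^ 2 by norm_num]
    exact iteratedDerivWithin_two_variationOfConstants_add hfc two_ne_zero _
      (uniqueDiffOn_Icc (by linarith)) hθ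
  have hGodd : ∀ θ ∈ I14, Gformula g (-θ) = -Gformula g θ := fun θ hθ => by
    rw [hGF hθ, hGF ⟨neg_le_neg hθ.2, by linarith [hθ.1]⟩]
    exact odd_variationOfConstants hfodd 2 _ θ
  have hGπ : Gformula g (π/4) = 0 := (hGF hπ4).trans (variationOfConstants_pi_div_four f)
  refine ⟨hC2, hode, hGπ, by rw [hGodd _ hπ4, hGπ, neg_zero], hGodd,
    fun G₂ hodd₂ hC₂ hode₂ hπ₂ _ => ?_⟩
  exact eqOn_I14_of_iteratedDerivWithin_two_add hC₂ hC2 hode₂ hode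
    (self_eq_neg.mp (by simpa using hodd₂ 0 h0)) (self_eq_neg.mp (by simpa using hGodd 0 h0))
    hπ₂ hGπ
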